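/- arXiv:1002.2021 — 3 statements merged into one kernel-verified Lean document; each statement's English description precedes it below -/
import Mathlib

section
/- Let D ≥ 1 and M ≥ 2 be integers, u₁, u₂ ∈ ℝ^D and θ₁, θ₂ > 0. Let f(ξ) = Σ_{|α| ≤ M} f_{1,α} 𝓗_{θ₁,α}(v₁) with v₁ = (ξ − u₁)/√θ₁. Suppose the functions F_α : [0,1] → ℝ, for |α| ≤ M, are differentiable and satisfy the projection ODE system with initial data F_α(0) = f_{1,α}. Define g(ξ) = Σ_{|α| ≤ M} F_α(1) 𝓗_{θ₂,α}(v₂) with v₂ = (ξ − u₂)/√θ₂. Then for every polynomial p : ℝ^D → ℝ of total degree at most M, ∫_{ℝ^D} p(ξ) f(ξ) dξ = ∫_{ℝ^D} p(ξ) g(ξ) dξ. -/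
open MeasureTheory

/-- The probabilists' Hermite polynomial `He n`, evaluated at a real number. -/
noncomputable def He (n : ℕ) (x : ℝ) : ℝ :=
  Polynomial.aeval x (Polynomial.hermite n)

/-- The basis function `𝓗_{θ,α}(v) = ∏_d (2π)^(-1/2) θ^(-(α_d+1)/2) He_{α_d}(v_d) e^(-v_d²/2)`. -/
noncomputable def Hb {D : ℕ} (θ : ℝ) (α : Fin D → ℕ) (v : Fin D → ℝ) : ℝ :=
  ∏ d, ((Real.sqrt (2 * Real.pi))⁻¹ * θ ^ (-(((α d : ℝ) + 1) / 2)) * He (α d) (v d) *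
    Real.exp (-(v d) ^ 2 / 2))

/-- The finite set of multi-indices `α : Fin D → ℕ` with `|α| ≤ M`. -/
noncomputable def multiIndices (D M : ℕ) : Finset (Fin D → ℕ) :=
  ((Finset.univ : Finset (Fin D → Fin (M + 1))).image (fun a => fun d => (a d : ℕ))).filter
    (fun α => (∑ d, α d) ≤ M)

/-!
Let `M_a(b; u, s) = hermiteMoment a b u s` be the `b`-th moment of
`x ↦ s^(-(a+1)) h_a((x - u) / s)`, where `h_a(y) = (2π)^(-1/2) He_a(y) e^(-y²/2)`.
Substituting `x = u + s y` makes it a Laurent polynomial in `(u, s)` with the Gaussian moments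
`∫ y^j He_a(y) e^(-y²/2)` as coefficients.
Gaussian integration by parts, `∫ y^b He_{a+1} e^(-y²/2) = b ∫ y^(b-1) He_a e^(-y²/2)`, and the
recurrence `He_{a+2} = y He_{a+1} - (a+1) He_a` give `∂_u M_a = M_{a+1}`, `∂_s M_a = s M_{a+2}`,
and `M_a(b) = 0` for `b < a`.

Expanding `p` into monomials `ξ^β`, both integrals are combinations of the products
`∏_d M_{α_d}(β_d; u_d, s)`. Move the centre and the scale along a path from `(u₁, √θ₁)` to
`(u₂, √θ₂)` chosen so that these products evolve by the raising operators `α ↦ α + e_d` and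
`α ↦ α + 2e_d`, with coefficients `-w_d √θ₁ S²` and `-θ₁ R S²`. The projection ODE moves `F` by
the adjoint lowering operators, so the pairing `∑_α F_α(τ) ∏_d M_{α_d}(β_d; u_d(τ), s(τ))` is
constant; at `τ = 0` and `τ = 1` it is the `β`-th moment of `f` and of `g`. Indices with `|α| > M`
play no role because their moments of order `|β| ≤ M` vanish.
-/

section

open Real Polynomial Finset

theorem Polynomial.derivative_hermite_succ (n : ℕ) :
    derivative (hermite (n + 1)) = (n + 1 : ℤ[X]) * hermite n := by
  induction n with
  | zero => simp
  | succ n ih =>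
    rw [hermite_succ (n + 1), derivative_sub, derivative_mul, derivative_X, ih, derivative_mul,
      hermite_succ n]
    push_cast
    simp only [derivative_add, derivative_natCast, derivative_one]
    ring

theorem Polynomial.hermite_add_two (n : ℕ) :
    hermite (n + 2) = X * hermite (n + 1) - (n + 1 : ℤ[X]) * hermite n := by
  rw [hermite_succ (n + 1), derivative_hermite_succ]

theorem integrable_aeval_mul_exp_neg_sq_div_two (P : ℤ[X]) :
    Integrable fun x : ℝ => aeval x P * exp (-x ^ 2 / 2) := by
  induction P using Polynomial.induction_on' with
  | add P Q hP hQ => simp only [map_add, add_mul]; exact hP.add hQ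
  | monomial n c =>
    have h := integrable_rpow_mul_exp_neg_mul_sq (b := 1 / 2) (by norm_num)
      (s := n) (by linarith [n.cast_nonneg (α := ℝ)])
    refine (h.const_mul (c : ℝ)).congr (Filter.Eventually.of_forall fun x => ?_)
    simp only [rpow_natCast, aeval_monomial, algebraMap_int_eq, eq_intCast]
    ring_nf

theorem integral_aeval_derivative_sub_X_mul_mul_exp_neg_sq_div_two (P : ℤ[X]) :
    ∫ x : ℝ, aeval x (derivative P - X * P) * exp (-x ^ 2 / 2) = 0 := by
  refine integral_eq_zero_of_hasDerivAt_of_integrable (fun x => ?_)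
    (integrable_aeval_mul_exp_neg_sq_div_two _) (integrable_aeval_mul_exp_neg_sq_div_two P)
  have hexp : HasDerivAt (fun x : ℝ => exp (-x ^ 2 / 2)) (-x * exp (-x ^ 2 / 2)) x := by
    have h : HasDerivAt (fun x : ℝ => -x ^ 2 / 2) (-x) x :=
      ((hasDerivAt_pow 2 x).fun_neg.div_const 2).congr_deriv (by push_cast; ring)
    simpa [mul_comm] using h.exp
  refine ((P.hasDerivAt_aeval x).fun_mul hexp).congr_deriv ?_
  simp only [map_sub, map_mul, aeval_X]
  ring

noncomputable def gaussHermiteMoment (a b : ℕ) : ℝ :=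
  ∫ x : ℝ, x ^ b * He a x * exp (-x ^ 2 / 2)

theorem integrable_pow_mul_He_mul_exp (a b : ℕ) :
    Integrable fun x : ℝ => x ^ b * He a x * exp (-x ^ 2 / 2) := by
  convert integrable_aeval_mul_exp_neg_sq_div_two (X ^ b * hermite a) using 2 with x
  simp [He]

theorem gaussHermiteMoment_succ (a b : ℕ) :
    gaussHermiteMoment (a + 1) b = b * gaussHermiteMoment a (b - 1) := by
  have h := integral_aeval_derivative_sub_X_mul_mul_exp_neg_sq_div_two (X ^ b * hermite a)
  have hP : ∀ x : ℝ, aeval x (derivative (X ^ b * hermite a) - X * (X ^ b * hermite a)) *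
      exp (-x ^ 2 / 2) = b * (x ^ (b - 1) * He a x * exp (-x ^ 2 / 2))
        - x ^ b * He (a + 1) x * exp (-x ^ 2 / 2) := by
    intro x
    simp only [He, hermite_succ a, derivative_mul, derivative_X_pow, map_sub, map_mul, map_add,
      map_pow, aeval_X, map_natCast]
    ring
  simp_rw [hP] at h
  rw [integral_sub ((integrable_pow_mul_He_mul_exp a _).const_mul _)
    (integrable_pow_mul_He_mul_exp _ _), integral_const_mul, sub_eq_zero] at h
  exact h.symm

theorem gaussHermiteMoment_add_two (a b : ℕ) :
    gaussHermiteMoment (a + 2) b = ((b : ℝ) - a) * gaussHermiteMoment a b := by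
  have hsplit : gaussHermiteMoment (a + 2) b =
      gaussHermiteMoment (a + 1) (b + 1) - (a + 1) * gaussHermiteMoment a b := by
    rw [gaussHermiteMoment, gaussHermiteMoment, gaussHermiteMoment, ← integral_const_mul,
      ← integral_sub (integrable_pow_mul_He_mul_exp _ _)
        ((integrable_pow_mul_He_mul_exp _ _).const_mul _)]
    congr 1 with x
    simp only [He, hermite_add_two, map_sub, map_mul, aeval_X, map_add, map_natCast, map_one]
    ring
  rw [hsplit, gaussHermiteMoment_succ, Nat.add_sub_cancel]
  push_cast
  ring

theorem gaussHermiteMoment_eq_zero_of_lt {a b : ℕ} (h : b < a) : gaussHermiteMoment a b = 0 := by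
  induction a generalizing b with
  | zero => omega
  | succ a ih =>
    rw [gaussHermiteMoment_succ]
    rcases b with _ | b
    · simp
    · rw [ih (by omega), mul_zero]

noncomputable def hermiteMoment (a b : ℕ) (u s : ℝ) : ℝ :=
  (√(2 * π))⁻¹ * ∑ j ∈ range (b + 1),
    b.choose j * u ^ (b - j) * s ^ ((j : ℤ) - a) * gaussHermiteMoment a j

theorem hermiteMoment_eq_zero_of_lt {a b : ℕ} (h : b < a) (u s : ℝ) :
    hermiteMoment a b u s = 0 := by
  rw [hermiteMoment, sum_eq_zero, mul_zero]
  intro j hj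
  rw [gaussHermiteMoment_eq_zero_of_lt (by simp at hj; omega), mul_zero]

theorem hermiteMoment_succ (a b : ℕ) (u s : ℝ) :
    hermiteMoment (a + 1) b u s = (√(2 * π))⁻¹ * ∑ j ∈ range (b + 1),
      b.choose j * ((b - j : ℕ) * u ^ (b - j - 1)) * s ^ ((j : ℤ) - a) *
        gaussHermiteMoment a j := by
  rw [hermiteMoment, sum_range_succ', sum_range_succ _ b]
  simp only [gaussHermiteMoment_succ, Nat.cast_zero, zero_mul, mul_zero, add_zero, Nat.sub_self,
    Nat.add_sub_cancel]
  congr 1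
  refine sum_congr rfl fun j _ => ?_
  have hchoose : (b.choose (j + 1) : ℝ) * (j + 1 : ℕ) = b.choose j * (b - j : ℕ) := by
    exact_mod_cast Nat.choose_succ_right_eq b j
  have hexp : ((j + 1 : ℕ) : ℤ) - (a + 1 : ℕ) = (j : ℤ) - a := by push_cast; ring
  rw [hexp, show b - (j + 1) = b - j - 1 by omega]
  linear_combination (u ^ (b - j - 1) * s ^ ((j : ℤ) - a) * gaussHermiteMoment a j) * hchoose

theorem mul_hermiteMoment_add_two (a b : ℕ) (u : ℝ) {s : ℝ} (hs : s ≠ 0) :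
    s * hermiteMoment (a + 2) b u s = (√(2 * π))⁻¹ * ∑ j ∈ range (b + 1),
      b.choose j * u ^ (b - j) * (((j : ℝ) - a) * s ^ ((j : ℤ) - a - 1)) *
        gaussHermiteMoment a j := by
  rw [hermiteMoment, mul_left_comm, mul_sum]
  congr 1
  refine sum_congr rfl fun j _ => ?_
  have hpow : s * s ^ ((j : ℤ) - (a + 2 : ℕ)) = s ^ ((j : ℤ) - a - 1) := by
    rw [← zpow_one_add₀ hs]
    congr 1
    push_cast
    ring
  rw [gaussHermiteMoment_add_two, ← hpow]
  ring

theorem hasDerivAt_hermiteMoment (a b : ℕ) {u s : ℝ → ℝ} {u' s' t : ℝ} (hu : HasDerivAt u u' t)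
    (hs : HasDerivAt s s' t) (hst : s t ≠ 0) :
    HasDerivAt (fun t => hermiteMoment a b (u t) (s t))
      (u' * hermiteMoment (a + 1) b (u t) (s t) + s' * (s t * hermiteMoment (a + 2) b (u t) (s t)))
      t := by
  have hterm : ∀ j ∈ range (b + 1), HasDerivAt
      (fun t => b.choose j * u t ^ (b - j) * s t ^ ((j : ℤ) - a) * gaussHermiteMoment a j)
      (b.choose j * ((b - j : ℕ) * u t ^ (b - j - 1) * u') * s t ^ ((j : ℤ) - a) *
          gaussHermiteMoment a j +
        b.choose j * u t ^ (b - j) * ((((j : ℤ) - a : ℤ) : ℝ) * s t ^ ((j : ℤ) - a - 1) * s') *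
          gaussHermiteMoment a j) t := by
    intro j _
    have hzpow := (hasDerivAt_zpow ((j : ℤ) - a) (s t) (Or.inl hst)).comp t hs
    refine ((((hu.fun_pow (b - j)).const_mul _).fun_mul hzpow).mul_const _).congr_deriv ?_
    simp only [Function.comp_apply]
    ring
  refine ((HasDerivAt.fun_sum hterm).const_mul (√(2 * π))⁻¹).congr_deriv ?_
  rw [hermiteMoment_succ, mul_hermiteMoment_add_two _ _ _ hst, mul_sum, mul_sum,
    mul_sum, mul_sum, mul_sum, ← sum_add_distrib]
  refine sum_congr rfl fun j _ => ?_
  push_cast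
  ring

noncomputable def basisFactor (θ : ℝ) (a : ℕ) (y : ℝ) : ℝ :=
  (√(2 * π))⁻¹ * θ ^ (-(((a : ℝ) + 1) / 2)) * He a y * exp (-y ^ 2 / 2)

theorem add_mul_pow_mul_basisFactor (θ u s : ℝ) (a b : ℕ) (y : ℝ) :
    (u + s * y) ^ b * basisFactor θ a y = ∑ j ∈ range (b + 1),
      b.choose j * u ^ (b - j) * s ^ j * ((√(2 * π))⁻¹ * θ ^ (-(((a : ℝ) + 1) / 2))) *
        (y ^ j * He a y * exp (-y ^ 2 / 2)) := by
  rw [add_comm, add_pow, sum_mul]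
  refine sum_congr rfl fun j _ => ?_
  rw [basisFactor]
  ring

theorem integrable_add_mul_pow_mul_basisFactor (θ u s : ℝ) (a b : ℕ) :
    Integrable fun y => (u + s * y) ^ b * basisFactor θ a y := by
  simp_rw [add_mul_pow_mul_basisFactor]
  exact integrable_finsetSum _ fun j _ => (integrable_pow_mul_He_mul_exp a j).const_mul _

theorem pow_mul_basisFactor_eq {s : ℝ} (hs : s ≠ 0) (θ u : ℝ) (a b : ℕ) (x : ℝ) :
    x ^ b * basisFactor θ a ((x - u) / s) =
      (u + s * ((x - u) / s)) ^ b * basisFactor θ a ((x - u) / s) := by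
  rw [mul_div_cancel₀ _ hs, add_sub_cancel]

theorem integrable_pow_mul_basisFactor {s : ℝ} (hs : s ≠ 0) (θ u : ℝ) (a b : ℕ) :
    Integrable fun x => x ^ b * basisFactor θ a ((x - u) / s) := by
  simp_rw [pow_mul_basisFactor_eq hs]
  exact ((integrable_add_mul_pow_mul_basisFactor θ u s a b).comp_div hs).comp_sub_right u

theorem rpow_neg_add_one_div_two {θ : ℝ} (hθ : 0 ≤ θ) (a : ℕ) :
    θ ^ (-(((a : ℝ) + 1) / 2)) = √θ ^ (-((a : ℤ) + 1)) := by
  rw [sqrt_eq_rpow, ← rpow_intCast, ← rpow_mul hθ]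
  congr 1
  push_cast
  ring

theorem integral_pow_mul_basisFactor {θ : ℝ} (hθ : 0 < θ) (a b : ℕ) (u : ℝ) :
    ∫ x, x ^ b * basisFactor θ a ((x - u) / √θ) = hermiteMoment a b u √θ := by
  have hs : 0 < √θ := sqrt_pos.2 hθ
  have hsubst : ∫ x, x ^ b * basisFactor θ a ((x - u) / √θ) =
      √θ * ∫ y, (u + √θ * y) ^ b * basisFactor θ a y := by
    simp_rw [pow_mul_basisFactor_eq hs.ne']
    rw [integral_sub_right_eq_self (fun z => (u + √θ * (z / √θ)) ^ b * basisFactor θ a (z / √θ)) u,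
      Measure.integral_comp_div (fun y => (u + √θ * y) ^ b * basisFactor θ a y), abs_of_pos hs,
      smul_eq_mul]
  have hpow : ∀ j : ℕ, √θ * √θ ^ (-((a : ℤ) + 1)) * √θ ^ j = √θ ^ ((j : ℤ) - a) := by
    intro j
    rw [← zpow_one_add₀ hs.ne', ← zpow_natCast, ← zpow_add₀ hs.ne']
    congr 1
    ring
  simp_rw [hsubst, add_mul_pow_mul_basisFactor]
  rw [integral_finsetSum _ fun j _ => (integrable_pow_mul_He_mul_exp a j).const_mul _,
    hermiteMoment, mul_sum, mul_sum]
  refine sum_congr rfl fun j _ => ?_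
  rw [integral_const_mul, rpow_neg_add_one_div_two hθ.le, ← hpow, gaussHermiteMoment]
  ring

theorem monomial_mul_Hb_eq_prod {D : ℕ} (θ : ℝ) (α β : Fin D → ℕ) (u ξ : Fin D → ℝ) :
    (∏ d, ξ d ^ β d) * Hb θ α (fun d => (ξ d - u d) / √θ) =
      ∏ d, ξ d ^ β d * basisFactor θ (α d) ((ξ d - u d) / √θ) := by
  rw [Hb, ← prod_mul_distrib]
  rfl

theorem integrable_monomial_mul_Hb {D : ℕ} {θ : ℝ} (hθ : 0 < θ) (α β : Fin D → ℕ)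
    (u : Fin D → ℝ) :
    Integrable fun ξ : Fin D → ℝ => (∏ d, ξ d ^ β d) * Hb θ α (fun d => (ξ d - u d) / √θ) := by
  simp_rw [monomial_mul_Hb_eq_prod]
  exact Integrable.fintype_prod fun d =>
    integrable_pow_mul_basisFactor (sqrt_pos.2 hθ).ne' θ (u d) (α d) (β d)

noncomputable def multiHermiteMoment {D : ℕ} (α β : Fin D → ℕ) (u : Fin D → ℝ) (s : ℝ) : ℝ :=
  ∏ d, hermiteMoment (α d) (β d) (u d) s

theorem integral_monomial_mul_Hb {D : ℕ} {θ : ℝ} (hθ : 0 < θ) (α β : Fin D → ℕ)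
    (u : Fin D → ℝ) :
    ∫ ξ : Fin D → ℝ, (∏ d, ξ d ^ β d) * Hb θ α (fun d => (ξ d - u d) / √θ) =
      multiHermiteMoment α β u √θ := by
  simp_rw [monomial_mul_Hb_eq_prod]
  rw [integral_fintype_prod_volume_eq_prod
    (fun d x => x ^ β d * basisFactor θ (α d) ((x - u d) / √θ))]
  exact prod_congr rfl fun d _ => integral_pow_mul_basisFactor hθ _ _ _

theorem integral_eval_mul_sum_Hb {D : ℕ} (p : MvPolynomial (Fin D) ℝ) {θ : ℝ} (hθ : 0 < θ)
    (u : Fin D → ℝ) (A : Finset (Fin D → ℕ)) (c : (Fin D → ℕ) → ℝ) :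
    ∫ ξ, MvPolynomial.eval ξ p * ∑ α ∈ A, c α * Hb θ α (fun d => (ξ d - u d) / √θ) =
      ∑ β ∈ p.support, p.coeff β *
        ∑ α ∈ A, c α * multiHermiteMoment α β u √θ := by
  have hexpand : ∀ ξ : Fin D → ℝ,
      MvPolynomial.eval ξ p * ∑ α ∈ A, c α * Hb θ α (fun d => (ξ d - u d) / √θ) =
        ∑ β ∈ p.support, ∑ α ∈ A, p.coeff β * c α *
          ((∏ d, ξ d ^ β d) * Hb θ α (fun d => (ξ d - u d) / √θ)) := by
    intro ξ
    rw [MvPolynomial.eval_eq', sum_mul]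
    refine sum_congr rfl fun β _ => ?_
    rw [mul_sum]
    refine sum_congr rfl fun α _ => ?_
    ring
  have hint : ∀ β α, Integrable fun ξ : Fin D → ℝ =>
      p.coeff β * c α * ((∏ d, ξ d ^ β d) * Hb θ α (fun d => (ξ d - u d) / √θ)) :=
    fun β α => (integrable_monomial_mul_Hb hθ α β u).const_mul _
  simp_rw [hexpand]
  rw [integral_finsetSum _ fun β _ => integrable_finsetSum _ fun α _ => hint β α]
  refine sum_congr rfl fun β _ => ?_
  rw [integral_finsetSum _ fun α _ => hint β α, mul_sum]
  refine sum_congr rfl fun α _ => ?_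
  rw [integral_const_mul, integral_monomial_mul_Hb hθ, mul_assoc]

theorem mem_multiIndices {D M : ℕ} {α : Fin D → ℕ} : α ∈ multiIndices D M ↔ ∑ d, α d ≤ M := by
  refine ⟨fun h => (mem_filter.1 h).2, fun h => mem_filter.2 ⟨?_, h⟩⟩
  have hle : ∀ d, α d < M + 1 := fun d =>
    Nat.lt_succ_of_le ((single_le_sum (fun i _ => Nat.zero_le (α i))
      (mem_univ d)).trans h)
  exact mem_image.2 ⟨fun d => ⟨α d, hle d⟩, mem_univ _, rfl⟩

theorem sub_ite_eq_sub_single {D : ℕ} (α : Fin D → ℕ) (d : Fin D) (k : ℕ) :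
    (fun i => α i - if i = d then k else 0) = α - Pi.single d k := by
  ext i
  simp [Pi.single_apply]

theorem sum_ite_sub_single_mul {R : Type*} [Semiring R] {D M : ℕ} (k : ℕ) (d : Fin D)
    (G P : (Fin D → ℕ) → R)
    (hP : ∀ γ ∉ multiIndices D M, P γ = 0) :
    ∑ α ∈ multiIndices D M, (if k ≤ α d then G (α - Pi.single d k) else 0) * P α =
      ∑ α ∈ multiIndices D M, G α * P (α + Pi.single d k) := by
  symm
  refine sum_bij_ne_zero (fun α _ _ => α + Pi.single d k) ?_ ?_ ?_ ?_
  · intro α _ hne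
    by_contra hmem
    exact hne (by rw [hP _ hmem, mul_zero])
  · intro α _ _ α' _ _ h
    exact add_right_cancel h
  · intro γ hγ hne
    have hk : k ≤ γ d := by
      by_contra hk
      exact hne (by rw [if_neg hk, zero_mul])
    have hcancel : γ - Pi.single d k + Pi.single d k = γ := by
      ext i
      by_cases hi : i = d
      · subst hi
        simp [hk]
      · simp [hi]
    refine ⟨γ - Pi.single d k, ?_, ?_, hcancel⟩
    · rw [mem_multiIndices] at hγ ⊢
      exact (sum_le_sum fun i _ => Nat.sub_le _ _).trans hγ
    · rw [hcancel]
      rwa [if_pos hk] at hne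
  · intro α _ _
    simp

theorem sum_mul_eq_of_hasDerivWithinAt_adjoint {D M : ℕ} (F P : (Fin D → ℕ) → ℝ → ℝ)
    (A : Fin D → ℝ → ℝ) (B : ℝ → ℝ)
    (hF : ∀ α ∈ multiIndices D M, ∀ τ ∈ Set.Icc (0 : ℝ) 1, HasDerivWithinAt (F α)
      (∑ d, (B τ * (if 2 ≤ α d then F (fun i => α i - if i = d then 2 else 0) τ else 0) +
        A d τ * (if 1 ≤ α d then F (fun i => α i - if i = d then 1 else 0) τ else 0)))
      (Set.Icc 0 1) τ)
    (hP : ∀ α ∈ multiIndices D M, ∀ τ ∈ Set.Icc (0 : ℝ) 1, HasDerivWithinAt (P α)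
      (-∑ d, (A d τ * P (α + Pi.single d 1) τ + B τ * P (α + Pi.single d 2) τ)) (Set.Icc 0 1) τ)
    (hP0 : ∀ γ ∉ multiIndices D M, ∀ τ, P γ τ = 0) :
    ∑ α ∈ multiIndices D M, F α 1 * P α 1 = ∑ α ∈ multiIndices D M, F α 0 * P α 0 := by
  have hshift : ∀ τ d k, ∑ α ∈ multiIndices D M,
      (if k ≤ α d then F (fun i => α i - if i = d then k else 0) τ else 0) * P α τ =
        ∑ α ∈ multiIndices D M, F α τ * P (α + Pi.single d k) τ := by
    intro τ d k
    simp only [sub_ite_eq_sub_single]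
    exact sum_ite_sub_single_mul k d (F · τ) (P · τ) fun γ hγ => hP0 γ hγ τ
  have hderiv : ∀ τ ∈ Set.Icc (0 : ℝ) 1,
      HasDerivWithinAt (fun τ => ∑ α ∈ multiIndices D M, F α τ * P α τ) 0 (Set.Icc 0 1) τ := by
    intro τ hτ
    refine (HasDerivWithinAt.fun_sum fun α hα => (hF α hα τ hτ).mul (hP α hα τ hτ)).congr_deriv ?_
    simp only [sum_mul, mul_neg, mul_sum, ← sum_neg_distrib, ← sum_add_distrib]
    rw [sum_comm]
    refine sum_eq_zero fun d _ => ?_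
    have hsplit : ∑ α ∈ multiIndices D M,
        ((B τ * (if 2 ≤ α d then F (fun i => α i - if i = d then 2 else 0) τ else 0) +
          A d τ * (if 1 ≤ α d then F (fun i => α i - if i = d then 1 else 0) τ else 0)) * P α τ
        + -(F α τ * (A d τ * P (α + Pi.single d 1) τ + B τ * P (α + Pi.single d 2) τ))) =
        B τ * (∑ α ∈ multiIndices D M,
            (if 2 ≤ α d then F (fun i => α i - if i = d then 2 else 0) τ else 0) * P α τ -
          ∑ α ∈ multiIndices D M, F α τ * P (α + Pi.single d 2) τ) +
        A d τ * (∑ α ∈ multiIndices D M,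
            (if 1 ≤ α d then F (fun i => α i - if i = d then 1 else 0) τ else 0) * P α τ -
          ∑ α ∈ multiIndices D M, F α τ * P (α + Pi.single d 1) τ) := by
      simp only [mul_sub, mul_sum, ← sum_sub_distrib, ← sum_add_distrib]
      exact sum_congr rfl fun α _ => by ring
    rw [hsplit, hshift, hshift, sub_self, sub_self, mul_zero, mul_zero, add_zero]
  have hcont : ContinuousOn (fun τ => ∑ α ∈ multiIndices D M, F α τ * P α τ) (Set.Icc 0 1) :=
    fun τ hτ => (hderiv τ hτ).continuousWithinAt
  exact constant_of_has_deriv_right_zero hcont (fun τ hτ =>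
    (hderiv τ (Set.Ico_subset_Icc_self hτ)).mono_of_mem_nhdsWithin (Icc_mem_nhdsGE_of_mem hτ))
    1 (Set.right_mem_Icc.2 zero_le_one)

theorem multiHermiteMoment_eq_zero {D M : ℕ} {β γ : Fin D → ℕ} (hβ : ∑ d, β d ≤ M)
    (hγ : γ ∉ multiIndices D M) (u : Fin D → ℝ) (s : ℝ) : multiHermiteMoment γ β u s = 0 := by
  rw [mem_multiIndices, not_le] at hγ
  obtain ⟨d, -, hd⟩ := exists_lt_of_sum_lt (hβ.trans_lt hγ)
  exact prod_eq_zero (mem_univ d) (hermiteMoment_eq_zero_of_lt hd _ _)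

theorem prod_erase_mul_add_single {ι M : Type*} [Fintype ι] [DecidableEq ι] [CommMonoid M]
    (f : ι → ℕ → M) (α : ι → ℕ) (d : ι) (k : ℕ) :
    (∏ j ∈ univ.erase d, f j (α j)) * f d (α d + k) = ∏ j, f j ((α + Pi.single d k : ι → ℕ) j) := by
  rw [← mul_prod_erase univ _ (mem_univ d), mul_comm]
  congr 1
  · simp
  · exact prod_congr rfl fun j hj => by simp [(mem_erase.1 hj).1]

theorem hasDerivAt_multiHermiteMoment {D : ℕ} (α β : Fin D → ℕ) {u : ℝ → Fin D → ℝ}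
    {s : ℝ → ℝ} {u' : Fin D → ℝ} {s' t : ℝ} (hu : ∀ d, HasDerivAt (fun t => u t d) (u' d) t)
    (hs : HasDerivAt s s' t) (hst : s t ≠ 0) :
    HasDerivAt (fun t => multiHermiteMoment α β (u t) (s t))
      (∑ d, (u' d * multiHermiteMoment (α + Pi.single d 1) β (u t) (s t) +
        s' * s t * multiHermiteMoment (α + Pi.single d 2) β (u t) (s t))) t := by
  refine (HasDerivAt.fun_finsetProd (u := univ)
    fun d _ => hasDerivAt_hermiteMoment (α d) (β d) (hu d) hs hst).congr_deriv
    (sum_congr rfl fun d _ => ?_)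
  rw [smul_eq_mul, multiHermiteMoment, multiHermiteMoment,
    ← prod_erase_mul_add_single (fun j a => hermiteMoment a (β j) (u t j) (s t)),
    ← prod_erase_mul_add_single (fun j a => hermiteMoment a (β j) (u t j) (s t))]
  ring

theorem hasDerivAt_one_div_linear (c τ : ℝ) (h : c * τ + 1 ≠ 0) :
    HasDerivAt (fun t => 1 / (c * t + 1)) (-c * (1 / (c * τ + 1)) ^ 2) τ := by
  have hlin : HasDerivAt (fun t => c * t + 1) c τ := by
    simpa using ((hasDerivAt_id τ).const_mul c).add_const 1
  simp only [one_div]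
  exact (hlin.inv h).congr_deriv (by field_simp)

theorem hasDerivAt_mul_one_div_linear (c τ : ℝ) (h : c * τ + 1 ≠ 0) :
    HasDerivAt (fun t => t * (1 / (c * t + 1))) ((1 / (c * τ + 1)) ^ 2) τ := by
  refine ((hasDerivAt_id τ).mul (hasDerivAt_one_div_linear c τ h)).congr_deriv ?_
  field_simp
  simp only [id_eq]
  ring

theorem sum_mul_multiHermiteMoment_eq {D M : ℕ} {u₁ u₂ : Fin D → ℝ} {θ₁ θ₂ : ℝ} (hθ₁ : 0 < θ₁)
    (hθ₂ : 0 < θ₂) {θh : ℝ} (hθh : θh = √(θ₁ / θ₂))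
    {w : Fin D → ℝ} (hw : w = fun d => (u₁ d - u₂ d) / √θ₂) {R S : ℝ → ℝ}
    (hR : ∀ τ, R τ = (θh - 1) / ((θh - 1) * τ + 1)) (hS : ∀ τ, S τ = 1 / ((θh - 1) * τ + 1))
    {f1 : (Fin D → ℕ) → ℝ} {F : (Fin D → ℕ) → ℝ → ℝ}
    (hODE : ∀ α ∈ multiIndices D M, ∀ τ ∈ Set.Icc (0 : ℝ) 1,
      HasDerivWithinAt (F α)
        (∑ d, S τ ^ 2 *
          (θ₁ * R τ * (if 2 ≤ α d then F (fun i => α i - if i = d then 2 else 0) τ else 0) +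
            w d * √θ₁ * (if 1 ≤ α d then F (fun i => α i - if i = d then 1 else 0) τ else 0)))
        (Set.Icc 0 1) τ)
    (hinit : ∀ α ∈ multiIndices D M, F α 0 = f1 α) {β : Fin D → ℕ} (hβ : ∑ d, β d ≤ M) :
    ∑ α ∈ multiIndices D M, f1 α * multiHermiteMoment α β u₁ √θ₁ =
      ∑ α ∈ multiIndices D M, F α 1 * multiHermiteMoment α β u₂ √θ₂ := by
  set c := θh - 1 with hc
  have hθh_pos : 0 < θh := hθh ▸ sqrt_pos.2 (div_pos hθ₁ hθ₂)
  have hs₁ : 0 < √θ₁ := sqrt_pos.2 hθ₁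
  have hden : ∀ τ ∈ Set.Icc (0 : ℝ) 1, c * τ + 1 ≠ 0 := by
    rintro τ ⟨h0, h1⟩
    rcases h0.eq_or_lt with rfl | hτ
    · simp
    · nlinarith [mul_pos hθh_pos hτ]
  -- `1 / s` and `u / s` interpolate linearly between their values at the two endpoints.
  set s : ℝ → ℝ := fun τ => √θ₁ * S τ
  set u : ℝ → Fin D → ℝ := fun τ d => u₁ d - w d * √θ₁ * (τ * S τ)
  have hSfun : S = fun τ => 1 / (c * τ + 1) := funext hS
  have hP : ∀ α ∈ multiIndices D M, ∀ τ ∈ Set.Icc (0 : ℝ) 1,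
      HasDerivWithinAt (fun τ => multiHermiteMoment α β (u τ) (s τ))
        (-∑ d, (S τ ^ 2 * (w d * √θ₁) * multiHermiteMoment (α + Pi.single d 1) β (u τ) (s τ) +
          S τ ^ 2 * (θ₁ * R τ) * multiHermiteMoment (α + Pi.single d 2) β (u τ) (s τ)))
        (Set.Icc 0 1) τ := by
    intro α _ τ hτ
    have hs : HasDerivAt s (√θ₁ * (-c * S τ ^ 2)) τ := by
      simpa only [s, hSfun] using (hasDerivAt_one_div_linear c τ (hden τ hτ)).const_mul √θ₁
    have hu : ∀ d, HasDerivAt (fun t => u t d) (-(w d * √θ₁ * S τ ^ 2)) τ := fun d => by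
      simpa only [u, hSfun] using
        ((hasDerivAt_mul_one_div_linear c τ (hden τ hτ)).const_mul (w d * √θ₁)).const_sub (u₁ d)
    have hst : s τ ≠ 0 := by
      simp only [s, hSfun]
      exact mul_ne_zero hs₁.ne' (one_div_ne_zero (hden τ hτ))
    have hRS : R τ = c * S τ := by rw [hR, hS]; ring
    have hsq : √θ₁ * √θ₁ = θ₁ := mul_self_sqrt hθ₁.le
    refine (hasDerivAt_multiHermiteMoment α β hu hs hst).hasDerivWithinAt.congr_deriv ?_
    rw [← sum_neg_distrib]
    refine sum_congr rfl fun d _ => ?_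
    linear_combination (S τ ^ 2 * θ₁ * multiHermiteMoment (α + Pi.single d 2) β (u τ) (s τ)) * hRS
      - (c * S τ ^ 3 * multiHermiteMoment (α + Pi.single d 2) β (u τ) (s τ)) * hsq
  have hconst := sum_mul_eq_of_hasDerivWithinAt_adjoint F
    (fun α τ => multiHermiteMoment α β (u τ) (s τ))
    (fun d τ => S τ ^ 2 * (w d * √θ₁)) (fun τ => S τ ^ 2 * (θ₁ * R τ))
    (fun α hα τ hτ => (hODE α hα τ hτ).congr_deriv (sum_congr rfl fun d _ => by ring))
    hP (fun γ hγ τ => multiHermiteMoment_eq_zero hβ hγ _ _)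
  have hS0 : S 0 = 1 := by simp [hS]
  have hS1 : S 1 = √θ₂ / √θ₁ := by
    rw [hS, hc, hθh, sqrt_div hθ₁.le, mul_one, sub_add_cancel, one_div_div]
  have hs1 : s 1 = √θ₂ := by
    simp only [s, hS1]
    field_simp
  have hu1 : u 1 = u₂ := by
    ext d
    simp only [u, hS1, hw]
    field_simp
    ring
  simp only [hS0, hu1, hs1, s, u, mul_zero, sub_zero, mul_one] at hconst
  rw [hconst]
  exact sum_congr rfl fun α hα => by rw [hinit α hα]

end

theorem stmt0_general (D M : ℕ)
    (u₁ u₂ : Fin D → ℝ) (θ₁ θ₂ : ℝ) (hθ₁ : 0 < θ₁) (hθ₂ : 0 < θ₂)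
    (θh : ℝ) (hθh : θh = Real.sqrt (θ₁ / θ₂))
    (w : Fin D → ℝ) (hw : w = fun d => (u₁ d - u₂ d) / Real.sqrt θ₂)
    (R S : ℝ → ℝ)
    (hR : ∀ τ, R τ = (θh - 1) / ((θh - 1) * τ + 1))
    (hS : ∀ τ, S τ = 1 / ((θh - 1) * τ + 1))
    (f1 : (Fin D → ℕ) → ℝ) (F : (Fin D → ℕ) → ℝ → ℝ)
    (hODE : ∀ α ∈ multiIndices D M, ∀ τ ∈ Set.Icc (0:ℝ) 1,
      HasDerivWithinAt (F α)
        (∑ d, (S τ) ^ 2 *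
          (θ₁ * R τ *
              (if 2 ≤ α d then F (fun i => α i - (if i = d then 2 else 0)) τ else 0)
            + w d * Real.sqrt θ₁ *
              (if 1 ≤ α d then F (fun i => α i - (if i = d then 1 else 0)) τ else 0)))
        (Set.Icc (0:ℝ) 1) τ)
    (hinit : ∀ α ∈ multiIndices D M, F α 0 = f1 α)
    (f g : (Fin D → ℝ) → ℝ)
    (hf : f = fun ξ => ∑ α ∈ multiIndices D M,
      f1 α * Hb θ₁ α (fun d => (ξ d - u₁ d) / Real.sqrt θ₁))
    (hg : g = fun ξ => ∑ α ∈ multiIndices D M,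
      F α 1 * Hb θ₂ α (fun d => (ξ d - u₂ d) / Real.sqrt θ₂)) :
    ∀ p : MvPolynomial (Fin D) ℝ, p.totalDegree ≤ M →
      ∫ ξ, MvPolynomial.eval ξ p * f ξ = ∫ ξ, MvPolynomial.eval ξ p * g ξ := by
  intro p hp
  simp only [hf, hg]
  rw [integral_eval_mul_sum_Hb p hθ₁, integral_eval_mul_sum_Hb p hθ₂]
  refine Finset.sum_congr rfl fun β hβ => congrArg _ ?_
  have hβM : ∑ d, β d ≤ M := by
    rw [← Finsupp.sum_fintype β (fun _ e => e) fun _ => rfl]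
    exact (MvPolynomial.le_totalDegree hβ).trans hp
  exact sum_mul_multiHermiteMoment_eq hθ₁ hθ₂ hθh hw hR hS hODE hinit hβM

/-- the conservative projection between `F_M(u₁,θ₁)` and `F_M(u₂,θ₂)`
preserves all moments of order at most `M`. -/
theorem stmt0 (D M : ℕ) (hD : 1 ≤ D) (hM : 2 ≤ M)
    (u₁ u₂ : Fin D → ℝ) (θ₁ θ₂ : ℝ) (hθ₁ : 0 < θ₁) (hθ₂ : 0 < θ₂)
    (θh : ℝ) (hθh : θh = Real.sqrt (θ₁ / θ₂))
    (w : Fin D → ℝ) (hw : w = fun d => (u₁ d - u₂ d) / Real.sqrt θ₂)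
    (R S : ℝ → ℝ)
    (hR : ∀ τ, R τ = (θh - 1) / ((θh - 1) * τ + 1))
    (hS : ∀ τ, S τ = 1 / ((θh - 1) * τ + 1))
    (f1 : (Fin D → ℕ) → ℝ) (F : (Fin D → ℕ) → ℝ → ℝ)
    (hODE : ∀ α ∈ multiIndices D M, ∀ τ ∈ Set.Icc (0:ℝ) 1,
      HasDerivWithinAt (F α)
        (∑ d, (S τ) ^ 2 *
          (θ₁ * R τ *
              (if 2 ≤ α d then F (fun i => α i - (if i = d then 2 else 0)) τ else 0)
            + w d * Real.sqrt θ₁ *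
              (if 1 ≤ α d then F (fun i => α i - (if i = d then 1 else 0)) τ else 0)))
        (Set.Icc (0:ℝ) 1) τ)
    (hinit : ∀ α ∈ multiIndices D M, F α 0 = f1 α)
    (f g : (Fin D → ℝ) → ℝ)
    (hf : f = fun ξ => ∑ α ∈ multiIndices D M,
      f1 α * Hb θ₁ α (fun d => (ξ d - u₁ d) / Real.sqrt θ₁))
    (hg : g = fun ξ => ∑ α ∈ multiIndices D M,
      F α 1 * Hb θ₂ α (fun d => (ξ d - u₂ d) / Real.sqrt θ₂)) :
    ∀ p : MvPolynomial (Fin D) ℝ, p.totalDegree ≤ M →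
      ∫ ξ, MvPolynomial.eval ξ p * f ξ = ∫ ξ, MvPolynomial.eval ξ p * g ξ :=
  stmt0_general D M u₁ u₂ θ₁ θ₂ hθ₁ hθ₂ θh hθh w hw R S hR hS f1 F hODE hinit f g hf hg
end

section
/- Let D ≥ 1, M ≥ 2, u ∈ ℝ^D, θ > 0 and j ∈ {1,…,D}. Let Π : F_{M+1}(u,θ) → F_M(u,θ) be the truncation that discards the terms with |α| = M+1. Fix m ∈ {0,…,M}, let x_i be a zero of He_{m+1} and p_{i,m} the unique polynomial of degree at most m taking the value 1 at x_i and 0 at the other zeros of He_{m+1}. Then for every multi-index α with |α| = M − m and α_j = 0, writing v = (ξ − u)/√θ, one has Π[ v_j · p_{i,m}(v_j) · 𝓗_{θ,α}(v) ] = x_i · p_{i,m}(v_j) · 𝓗_{θ,α}(v); i.e., the function p_{i,m}(v_j) 𝓗_{θ,α}(v) is an eigenvector of f ↦ Π(v_j f) with eigenvalue x_i. -/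
/-!
Since `α_j = 0`, multiplying `𝓗_{θ,α}(v)` by `He_l(v_j)` only raises the `j`-th index, giving a
multiple of `𝓗_{θ,α + l e_j}(v)`. Expanding `p` in the Hermite basis therefore puts
`p(v_j) 𝓗_{θ,α}(v)` in `F_M(u,θ)`. For the eigenvalue identity, `(X - x_i) p - p_m He_{m+1}` has
degree at most `m` and vanishes at every zero of `He_{m+1}`; these are `m + 1` distinct reals
(Rolle's theorem for `He_n(x) e^{-x²/2}`, whose derivative is `-He_{n+1}(x) e^{-x²/2}`, applied
between consecutive zeros and on the two unbounded ends), so it is zero. Hence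
`(v_j - x_i) p(v_j) 𝓗_{θ,α}(v) = p_m He_{m+1}(v_j) 𝓗_{θ,α}(v)` is a multiple of a single basis
function of order `M + 1`.
-/

open MeasureTheory

/-- The space `F_M(u,θ)`: the span of `ξ ↦ 𝓗_{θ,α}((ξ-u)/√θ)` over `|α| ≤ M`. -/
noncomputable def FMspace (D M : ℕ) (u : Fin D → ℝ) (θ : ℝ) :
    Submodule ℝ ((Fin D → ℝ) → ℝ) :=
  Submodule.span ℝ
    {g | ∃ α : Fin D → ℕ, (∑ d, α d) ≤ M ∧
      g = fun ξ => Hb θ α (fun d => (ξ d - u d) / Real.sqrt θ)}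

open Filter Topology Polynomial

theorem exists_deriv_eq_zero_of_tendsto_atTop {f : ℝ → ℝ} {a : ℝ} (hf : Differentiable ℝ f)
    (hfa : f a = 0) (hf0 : Tendsto f atTop (𝓝 0)) : ∃ c, a < c ∧ deriv f c = 0 := by
  -- `t ↦ a - log t` maps `(0, 1)` onto `(a, ∞)`, which reduces the claim to Rolle on `(0, 1)`.
  have hφ : ∀ s : ℝ, s ≠ 0 → HasDerivAt (fun t => a - Real.log t) (-s⁻¹) s := fun s hs => by
    simpa using (Real.hasDerivAt_log hs).const_sub a
  have h0 : Tendsto (f ∘ fun t => a - Real.log t) (𝓝[>] 0) (𝓝 0) :=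
    hf0.comp (tendsto_atTop_add_const_left _ a
      (tendsto_neg_atBot_atTop.comp Real.tendsto_log_nhdsGT_zero))
  have h1 : Tendsto (f ∘ fun t => a - Real.log t) (𝓝[<] 1) (𝓝 0) := by
    have hcont : ContinuousAt (f ∘ fun t => a - Real.log t) 1 :=
      hf.continuous.continuousAt.comp (hφ 1 one_ne_zero).continuousAt
    simpa [hfa] using hcont.tendsto.mono_left nhdsWithin_le_nhds
  obtain ⟨c, hc, hc0⟩ := exists_hasDerivAt_eq_zero' zero_lt_one h0 h1
    fun t ht => (hf _).hasDerivAt.comp t (hφ t ht.1.ne')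
  exact ⟨a - Real.log c, by linarith [Real.log_neg hc.1 hc.2], by simpa [hc.1.ne'] using hc0⟩

theorem exists_deriv_eq_zero_of_tendsto_atBot {f : ℝ → ℝ} {a : ℝ} (hf : Differentiable ℝ f)
    (hfa : f a = 0) (hf0 : Tendsto f atBot (𝓝 0)) : ∃ c, c < a ∧ deriv f c = 0 := by
  obtain ⟨c, hc, hc0⟩ := exists_deriv_eq_zero_of_tendsto_atTop (f := fun x => f (-x)) (a := -a)
    (hf.comp differentiable_neg) (by simpa) (hf0.comp tendsto_neg_atTop_atBot)
  exact ⟨-c, by linarith, by simpa [deriv_comp_neg] using hc0⟩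

theorem Finset.card_add_one_le_of_deriv_eq_zero {f : ℝ → ℝ} (hf : Differentiable ℝ f)
    (hf0 : Tendsto f (cocompact ℝ) (𝓝 0)) {s t : Finset ℝ} (hs : s.Nonempty)
    (hfs : ∀ x ∈ s, f x = 0) (ht : ∀ x, deriv f x = 0 → x ∈ t) : s.card + 1 ≤ t.card := by
  -- a critical point between any two consecutive zeros, and one beyond each extreme zero
  rw [cocompact_eq_atBot_atTop, tendsto_sup] at hf0
  obtain ⟨a, ha, ha0⟩ := exists_deriv_eq_zero_of_tendsto_atBot hf (hfs _ (s.min'_mem hs)) hf0.1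
  obtain ⟨b, hb, hb0⟩ := exists_deriv_eq_zero_of_tendsto_atTop hf (hfs _ (s.max'_mem hs)) hf0.2
  set t' := t.filter fun z => s.min' hs < z ∧ z < s.max' hs
  have hinter : s.card ≤ t'.card + 1 := card_le_of_interleaved fun x hx y hy hxy _ => by
    obtain ⟨z, hz, hz0⟩ := exists_deriv_eq_zero hxy hf.continuous.continuousOn
      (by rw [hfs x hx, hfs y hy])
    exact ⟨z, mem_filter.2 ⟨ht z hz0, (s.min'_le x hx).trans_lt hz.1,
      hz.2.trans_le (s.le_max' y hy)⟩, hz.1, hz.2⟩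
  have hmin_le_max := s.min'_le _ (s.max'_mem hs)
  have hb' : b ∉ t' := fun h => (mem_filter.1 h).2.2.not_gt hb
  have ha' : a ∉ insert b t' := by
    simp only [mem_insert, not_or]
    exact ⟨by linarith, fun h => (mem_filter.1 h).2.1.not_gt ha⟩
  calc s.card + 1 ≤ (insert a (insert b t')).card := by
        rw [card_insert_of_notMem ha', card_insert_of_notMem hb']; omega
    _ ≤ t.card := card_le_card <| insert_subset (ht a ha0) <|
        insert_subset (ht b hb0) (filter_subset _ _)

noncomputable def realHermite (n : ℕ) : ℝ[X] := (hermite n).map (algebraMap ℤ ℝ)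

theorem eval_realHermite (n : ℕ) (x : ℝ) : (realHermite n).eval x = He n x :=
  eval_map_algebraMap _ _

theorem realHermite_monic (n : ℕ) : (realHermite n).Monic := (hermite_monic n).map _

theorem natDegree_realHermite (n : ℕ) : (realHermite n).natDegree = n := by
  rw [realHermite, (hermite_monic n).natDegree_map, natDegree_hermite]

theorem realHermite_succ (n : ℕ) :
    realHermite (n + 1) = X * realHermite n - derivative (realHermite n) := by
  simp [realHermite, hermite_succ, derivative_map]

noncomputable def hermiteSequence : Polynomial.Sequence ℝ where
  elems' := realHermite
  degree_eq' n := by rw [realHermite, (hermite_monic n).degree_map, degree_hermite]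

theorem tendsto_eval_mul_exp_neg_sq_cocompact (p : ℝ[X]) :
    Tendsto (fun x => p.eval x * Real.exp (-(x ^ 2 / 2))) (cocompact ℝ) (𝓝 0) := by
  induction p using Polynomial.induction_on' with
  | add p q hp hq => simpa [add_mul] using hp.add hq
  | monomial n c =>
    rw [tendsto_zero_iff_norm_tendsto_zero]
    have := (tendsto_rpow_abs_mul_exp_neg_mul_sq_cocompact one_half_pos n).const_mul |c|
    rw [mul_zero] at this
    refine this.congr fun x => ?_
    simp only [eval_monomial, norm_mul, Real.norm_eq_abs, norm_pow, Real.abs_exp,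
      Real.rpow_natCast]
    ring_nf

theorem hasDerivAt_eval_realHermite_mul_exp (n : ℕ) (x : ℝ) :
    HasDerivAt (fun y => (realHermite n).eval y * Real.exp (-(y ^ 2 / 2)))
      (-((realHermite (n + 1)).eval x * Real.exp (-(x ^ 2 / 2)))) x := by
  have hexp : HasDerivAt (fun y : ℝ => Real.exp (-(y ^ 2 / 2)))
      (Real.exp (-(x ^ 2 / 2)) * -x) x := by
    simpa using ((hasDerivAt_pow 2 x).div_const 2).neg.exp
  refine (((realHermite n).hasDerivAt x).mul hexp).congr_deriv ?_
  rw [realHermite_succ]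
  simp only [eval_sub, eval_mul, eval_X]
  ring

theorem mem_roots_realHermite {n : ℕ} {x : ℝ} :
    x ∈ (realHermite n).roots.toFinset ↔ He n x = 0 := by
  rw [Multiset.mem_toFinset, mem_roots (realHermite_monic n).ne_zero, IsRoot, eval_realHermite]

theorem card_roots_realHermite_succ (n : ℕ) :
    (realHermite (n + 1)).roots.toFinset.card = n + 1 := by
  refine le_antisymm ?_ ?_
  · calc _ ≤ Multiset.card (realHermite (n + 1)).roots := Multiset.toFinset_card_le _
      _ ≤ n + 1 := (card_roots' _).trans (natDegree_realHermite _).le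
  · induction n with
    | zero => simp [realHermite]
    | succ n ih =>
      refine (Nat.add_le_add_right ih 1).trans <| Finset.card_add_one_le_of_deriv_eq_zero
        (f := fun y => (realHermite (n + 1)).eval y * Real.exp (-(y ^ 2 / 2)))
        (fun x => (hasDerivAt_eval_realHermite_mul_exp _ x).differentiableAt)
        (tendsto_eval_mul_exp_neg_sq_cocompact _) ?_ ?_ ?_
      · exact Finset.card_pos.1 (by omega)
      · intro x hx
        rw [Multiset.mem_toFinset, mem_roots (realHermite_monic _).ne_zero] at hx
        simp [hx.eq_zero]
      · intro x hx
        rw [(hasDerivAt_eval_realHermite_mul_exp _ x).deriv] at hx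
        rw [Multiset.mem_toFinset, mem_roots (realHermite_monic _).ne_zero, IsRoot]
        simpa using hx

theorem degree_X_sub_C_mul_sub_C_mul_lt {R : Type*} [CommRing R] {p q : R[X]} {m : ℕ}
    (hp : p.degree ≤ m) (hq : q.Monic) (hqm : q.natDegree = m + 1) (a : R) :
    ((X - C a) * p - C (p.coeff m) * q).degree < ↑(m + 1) := by
  have hp0 : ∀ l, m < l → p.coeff l = 0 := fun l hl =>
    coeff_eq_zero_of_degree_lt (hp.trans_lt (by exact_mod_cast hl))
  rw [degree_lt_iff_coeff_zero]
  intro k hk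
  obtain ⟨i, rfl⟩ : ∃ i, k = i + 1 := ⟨k - 1, by omega⟩
  rw [coeff_sub, mul_comm, coeff_mul_X_sub_C, coeff_C_mul, hp0 (i + 1) (by omega)]
  rcases (show m ≤ i by omega).eq_or_lt with rfl | hi
  · rw [← hqm, hq.coeff_natDegree]
    ring
  · rw [hp0 i hi, coeff_eq_zero_of_natDegree_lt (p := q) (by omega)]
    ring

theorem X_sub_C_mul_eq_C_mul_realHermite {m : ℕ} {xi : ℝ} {p : ℝ[X]} (hdeg : p.degree ≤ m)
    (hpz : ∀ y, He (m + 1) y = 0 → y ≠ xi → p.eval y = 0) :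
    (X - C xi) * p = C (p.coeff m) * realHermite (m + 1) := by
  refine eq_of_degree_sub_lt_of_eval_finset_eq (realHermite (m + 1)).roots.toFinset ?_ ?_
  · rw [card_roots_realHermite_succ]
    exact degree_X_sub_C_mul_sub_C_mul_lt hdeg (realHermite_monic _) (natDegree_realHermite _) xi
  · intro y hy
    rw [mem_roots_realHermite] at hy
    obtain rfl | hne := eq_or_ne y xi
    · simp [eval_realHermite, hy]
    · simp [eval_realHermite, hy, hpz y hy hne]

theorem He_mul_Hb {D : ℕ} {θ : ℝ} (hθ : 0 < θ) {α : Fin D → ℕ} {j : Fin D} (hαj : α j = 0)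
    (l : ℕ) (v : Fin D → ℝ) :
    He l (v j) * Hb θ α v = θ ^ ((l : ℝ) / 2) * Hb θ (Function.update α j l) v := by
  classical
  set F : ℕ → ℝ → ℝ := fun k x =>
    (Real.sqrt (2 * Real.pi))⁻¹ * θ ^ (-(((k : ℝ) + 1) / 2)) * He k x * Real.exp (-x ^ 2 / 2)
  have hHb : ∀ β, Hb θ β v = F (β j) (v j) * ∏ d ∈ {j}ᶜ, F (β d) (v d) := fun β =>
    Fintype.prod_eq_mul_prod_compl j _
  have hrest : ∏ d ∈ {j}ᶜ, F (Function.update α j l d) (v d) = ∏ d ∈ {j}ᶜ, F (α d) (v d) :=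
    Finset.prod_congr rfl fun d hd => by
      rw [Function.update_of_ne (Finset.notMem_singleton.1 (Finset.mem_compl.1 hd))]
  have hθl : θ ^ ((l : ℝ) / 2) * θ ^ (-(((l : ℝ) + 1) / 2)) = θ ^ (-((((0 : ℕ) : ℝ) + 1) / 2)) := by
    rw [← Real.rpow_add hθ]
    ring_nf
  have hHe0 : He 0 (v j) = 1 := by simp [He]
  rw [hHb, hHb, hrest, Function.update_self, hαj]
  simp only [F, hHe0]
  rw [← hθl]
  ring

theorem sum_update_of_eq_zero {D : ℕ} {α : Fin D → ℕ} {j : Fin D} (hαj : α j = 0) (l : ℕ) :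
    ∑ d, Function.update α j l d = l + ∑ d, α d := by
  classical
  rw [Finset.sum_update_of_mem (Finset.mem_univ j),
    Finset.sum_eq_add_sum_sdiff_singleton_of_mem (Finset.mem_univ j), hαj, zero_add]

theorem eval_mul_Hb_mem_FMspace {D M m : ℕ} {u : Fin D → ℝ} {θ : ℝ} (hθ : 0 < θ) {j : Fin D}
    {p : ℝ[X]} (hdeg : p.degree ≤ m) {α : Fin D → ℕ} (hαj : α j = 0)
    (hαm : (∑ d, α d) + m ≤ M) :
    (fun ξ : Fin D → ℝ => p.eval ((ξ j - u j) / Real.sqrt θ) *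
        Hb θ α (fun d => (ξ d - u d) / Real.sqrt θ)) ∈ FMspace D M u θ := by
  set w : (Fin D → ℝ) → Fin D → ℝ := fun ξ d => (ξ d - u d) / Real.sqrt θ
  let Φ : ℝ[X] →ₗ[ℝ] (Fin D → ℝ) → ℝ := LinearMap.pi fun ξ => Hb θ α (w ξ) • leval (w ξ j)
  have hp : p ∈ Submodule.span ℝ (hermiteSequence '' Set.Iic m) := by
    rw [hermiteSequence.span_degreeLE fun i _ => by
      simp [hermiteSequence, (realHermite_monic i).leadingCoeff]]
    exact mem_degreeLE.2 hdeg
  have hΦ : (Submodule.span ℝ (hermiteSequence '' Set.Iic m)).map Φ ≤ FMspace D M u θ := by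
    rw [Submodule.map_span_le]
    rintro _ ⟨l, hl, rfl⟩
    have hΦl : Φ (hermiteSequence l) =
        θ ^ ((l : ℝ) / 2) • fun ξ => Hb θ (Function.update α j l) (w ξ) := by
      funext ξ
      simp [Φ, hermiteSequence, eval_realHermite, ← He_mul_Hb hθ hαj, mul_comm]
    rw [hΦl]
    refine Submodule.smul_mem _ _ (Submodule.subset_span ⟨_, ?_, rfl⟩)
    rw [sum_update_of_eq_zero hαj]
    have : l ≤ m := hl
    omega
  convert hΦ ⟨p, hp, rfl⟩ using 1
  funext ξ
  simp [Φ, w, mul_comm]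

theorem coord_sub_mul_eval_mul_Hb_mem_span {D M m : ℕ} {u : Fin D → ℝ} {θ : ℝ} (hθ : 0 < θ)
    {j : Fin D} {xi : ℝ} {p : ℝ[X]} (hdeg : p.degree ≤ m)
    (hpz : ∀ y, He (m + 1) y = 0 → y ≠ xi → p.eval y = 0) {α : Fin D → ℕ} (hαj : α j = 0)
    (hαm : (∑ d, α d) + m = M) :
    ((fun ξ : Fin D → ℝ => (ξ j - u j) / Real.sqrt θ *
          (p.eval ((ξ j - u j) / Real.sqrt θ) * Hb θ α (fun d => (ξ d - u d) / Real.sqrt θ)))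
        - (fun ξ : Fin D → ℝ => xi *
          (p.eval ((ξ j - u j) / Real.sqrt θ) * Hb θ α (fun d => (ξ d - u d) / Real.sqrt θ)))) ∈
      Submodule.span ℝ
        {g | ∃ β : Fin D → ℕ, (∑ d, β d) = M + 1 ∧
          g = fun ξ => Hb θ β (fun d => (ξ d - u d) / Real.sqrt θ)} := by
  set w : (Fin D → ℝ) → Fin D → ℝ := fun ξ d => (ξ d - u d) / Real.sqrt θ
  have key : ((fun ξ => w ξ j * (p.eval (w ξ j) * Hb θ α (w ξ))) -
      fun ξ => xi * (p.eval (w ξ j) * Hb θ α (w ξ))) =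
      (p.coeff m * θ ^ (((m + 1 : ℕ) : ℝ) / 2)) •
        fun ξ => Hb θ (Function.update α j (m + 1)) (w ξ) := by
    funext ξ
    have h := congrArg (eval (w ξ j)) (X_sub_C_mul_eq_C_mul_realHermite hdeg hpz)
    simp only [eval_mul, eval_sub, eval_X, eval_C, eval_realHermite] at h
    simp only [Pi.sub_apply, Pi.smul_apply, smul_eq_mul]
    linear_combination Hb θ α (w ξ) * h + p.coeff m * He_mul_Hb hθ hαj (m + 1) (w ξ)
  rw [key]
  refine Submodule.smul_mem _ _ (Submodule.subset_span ⟨_, ?_, rfl⟩)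
  rw [sum_update_of_eq_zero hαj]
  omega

-- `Π(v_j f) = x_i f` is encoded as: `f ∈ F_M(u,θ)` and `v_j f - x_i f` lies in the span of the
-- basis functions of order exactly `M + 1`, the part discarded by `Π`.
theorem stmt7_general (D M : ℕ)
    (u : Fin D → ℝ) (θ : ℝ) (hθ : 0 < θ) (j : Fin D)
    (m : ℕ) (hm : m ≤ M) (xi : ℝ)
    (p : Polynomial ℝ) (hdeg : p.degree ≤ m)
    (hpz : ∀ y : ℝ, He (m + 1) y = 0 → y ≠ xi → p.eval y = 0)
    (α : Fin D → ℕ) (hα : (∑ d, α d) = M - m) (hαj : α j = 0) :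
    (fun ξ : Fin D → ℝ => p.eval ((ξ j - u j) / Real.sqrt θ) *
        Hb θ α (fun d => (ξ d - u d) / Real.sqrt θ)) ∈ FMspace D M u θ ∧
    ((fun ξ : Fin D → ℝ => (ξ j - u j) / Real.sqrt θ *
          (p.eval ((ξ j - u j) / Real.sqrt θ) * Hb θ α (fun d => (ξ d - u d) / Real.sqrt θ)))
        - (fun ξ : Fin D → ℝ => xi *
          (p.eval ((ξ j - u j) / Real.sqrt θ) * Hb θ α (fun d => (ξ d - u d) / Real.sqrt θ)))) ∈
      Submodule.span ℝ
        {g | ∃ β : Fin D → ℕ, (∑ d, β d) = M + 1 ∧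
          g = fun ξ => Hb θ β (fun d => (ξ d - u d) / Real.sqrt θ)} := by
  have hαm : (∑ d, α d) + m = M := by omega
  exact ⟨eval_mul_Hb_mem_FMspace hθ hdeg hαj hαm.le,
    coord_sub_mul_eval_mul_Hb_mem_span hθ hdeg hpz hαj hαm⟩

/-- for a zero `x_i` of `He_{m+1}` with Lagrange polynomial `p_{i,m}`, and any
multi-index `α` with `|α| = M − m` and `α_j = 0`, the function `p_{i,m}(v_j)𝓗_{θ,α}(v)`
is an eigenvector of `f ↦ Π(v_j f)` with eigenvalue `x_i`: it belongs to `F_M(u,θ)` and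
`v_j·p_{i,m}(v_j)𝓗_{θ,α}(v) − x_i·p_{i,m}(v_j)𝓗_{θ,α}(v)` lies in the span of the
basis functions of order exactly `M+1` (the part discarded by the truncation `Π`). -/
theorem stmt7 (D M : ℕ) (hD : 1 ≤ D) (hM : 2 ≤ M)
    (u : Fin D → ℝ) (θ : ℝ) (hθ : 0 < θ) (j : Fin D)
    (m : ℕ) (hm : m ≤ M) (xi : ℝ) (hxi : He (m + 1) xi = 0)
    (p : Polynomial ℝ) (hdeg : p.degree ≤ m) (hpxi : p.eval xi = 1)
    (hpz : ∀ y : ℝ, He (m + 1) y = 0 → y ≠ xi → p.eval y = 0)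
    (α : Fin D → ℕ) (hα : (∑ d, α d) = M - m) (hαj : α j = 0) :
    (fun ξ : Fin D → ℝ => p.eval ((ξ j - u j) / Real.sqrt θ) *
        Hb θ α (fun d => (ξ d - u d) / Real.sqrt θ)) ∈ FMspace D M u θ ∧
    ((fun ξ : Fin D → ℝ => (ξ j - u j) / Real.sqrt θ *
          (p.eval ((ξ j - u j) / Real.sqrt θ) * Hb θ α (fun d => (ξ d - u d) / Real.sqrt θ)))
        - (fun ξ : Fin D → ℝ => xi *
          (p.eval ((ξ j - u j) / Real.sqrt θ) * Hb θ α (fun d => (ξ d - u d) / Real.sqrt θ)))) ∈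
      Submodule.span ℝ
        {g | ∃ β : Fin D → ℕ, (∑ d, β d) = M + 1 ∧
          g = fun ξ => Hb θ β (fun d => (ξ d - u d) / Real.sqrt θ)} :=
  stmt7_general D M u θ hθ j m hm xi p hdeg hpz α hα hαj
end

section
/- Let D ≥ 1 and M ≥ 2 be integers, u₁, u₂ ∈ ℝ^D and θ₁, θ₂ > 0, and let the functions F_α : [0,1] → ℝ, for |α| ≤ M, be differentiable and satisfy the projection ODE system. If the initial data satisfy F_α(0) = 0 for every multi-index α with |α| < M, then for all τ ∈ [0,1]: F_α(τ) = 0 for every α with |α| < M, and F_α(τ) = F_α(0) for every α with |α| = M. In other words, if only the order-M coefficients are nonzero initially, then all coefficients are unchanged by the projection. -/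
lemma const_of_deriv_zero_aux {f : ℝ → ℝ}
    (h : ∀ σ ∈ Set.Icc (0:ℝ) 1, HasDerivWithinAt f 0 (Set.Icc (0:ℝ) 1) σ) :
    ∀ τ ∈ Set.Icc (0:ℝ) 1, f τ = f 0 := by
  have hdiff : DifferentiableOn ℝ f (Set.Icc (0:ℝ) 1) :=
    fun σ hσ => (h σ hσ).differentiableWithinAt
  have hud : UniqueDiffOn ℝ (Set.Icc (0:ℝ) 1) := uniqueDiffOn_Icc one_pos
  exact constant_of_derivWithin_zero hdiff fun x hx =>
    (h x (Set.Ico_subset_Icc_self hx)).derivWithin (hud x (Set.Ico_subset_Icc_self hx))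


/-- in the projection ODE system, if all coefficients of order `< M`
vanish initially, then they vanish for all `τ ∈ [0,1]`, and all coefficients of order
exactly `M` remain constant. -/
theorem stmt17 (D M : ℕ) (hD : 1 ≤ D) (hM : 2 ≤ M)
    (u₁ u₂ : Fin D → ℝ) (θ₁ θ₂ : ℝ) (hθ₁ : 0 < θ₁) (hθ₂ : 0 < θ₂)
    (θh : ℝ) (hθh : θh = Real.sqrt (θ₁ / θ₂))
    (w : Fin D → ℝ) (hw : w = fun d => (u₁ d - u₂ d) / Real.sqrt θ₂)
    (R S : ℝ → ℝ)
    (hR : ∀ τ, R τ = (θh - 1) / ((θh - 1) * τ + 1))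
    (hS : ∀ τ, S τ = 1 / ((θh - 1) * τ + 1))
    (F : (Fin D → ℕ) → ℝ → ℝ)
    (hODE : ∀ α : Fin D → ℕ, (∑ d, α d) ≤ M → ∀ τ ∈ Set.Icc (0 : ℝ) 1,
      HasDerivWithinAt (F α)
        (∑ d, (S τ) ^ 2 *
          (θ₁ * R τ *
              (if 2 ≤ α d then F (fun i => α i - (if i = d then 2 else 0)) τ else 0)
            + w d * Real.sqrt θ₁ *
              (if 1 ≤ α d then F (fun i => α i - (if i = d then 1 else 0)) τ else 0)))
        (Set.Icc (0 : ℝ) 1) τ)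
    (hinit : ∀ α : Fin D → ℕ, (∑ d, α d) < M → F α 0 = 0) :
    ∀ τ ∈ Set.Icc (0 : ℝ) 1,
      (∀ α : Fin D → ℕ, (∑ d, α d) < M → F α τ = 0) ∧
      (∀ α : Fin D → ℕ, (∑ d, α d) = M → F α τ = F α 0) := by
  have key : ∀ n, n ≤ M → ∀ α : Fin D → ℕ, (∑ d, α d) = n →
      ∀ τ ∈ Set.Icc (0:ℝ) 1, F α τ = F α 0 := by
    intro n
    induction n using Nat.strong_induction_on with
    | _ n IH =>
      intro hn α hα
      have hz : ∀ σ ∈ Set.Icc (0:ℝ) 1, HasDerivWithinAt (F α) 0 (Set.Icc (0:ℝ) 1) σ := by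
        intro σ hσ
        have h := hODE α (hα ▸ hn) σ hσ
        have hzero : (∑ d, (S σ) ^ 2 *
            (θ₁ * R σ *
                (if 2 ≤ α d then F (fun i => α i - (if i = d then 2 else 0)) σ else 0)
              + w d * Real.sqrt θ₁ *
                (if 1 ≤ α d then F (fun i => α i - (if i = d then 1 else 0)) σ else 0))) = 0 := by
          apply Finset.sum_eq_zero
          intro d _
          have hterm : ∀ k : ℕ, 1 ≤ k → k ≤ α d →
              F (fun i => α i - (if i = d then k else 0)) σ = 0 := by
            intro k hk1 hk
            set β : Fin D → ℕ := fun i => α i - (if i = d then k else 0) with hβ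
            have hsum : (∑ i, β i) + k = n := by
              have h1 : ∀ i ∈ Finset.univ, (if i = d then k else 0) ≤ α i := by
                intro i _
                split_ifs with hi
                · exact hi ▸ hk
                · exact Nat.zero_le _
              have h2 : (∑ i, β i) = (∑ i, α i) - (∑ i, (if i = d then k else 0)) :=
                Finset.sum_tsub_distrib Finset.univ h1
              have h3 : (∑ i : Fin D, (if i = d then k else 0)) = k := by
                simp [Finset.sum_ite_eq']
              have h4 : k ≤ ∑ i, α i :=
                hk.trans (Finset.single_le_sum (fun i _ => Nat.zero_le _) (Finset.mem_univ d))
              omega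
            have hlt : (∑ i, β i) < n := by omega
            have hle : (∑ i, β i) ≤ M := by omega
            have := IH _ hlt hle β rfl σ hσ
            rw [this]
            exact hinit β (by omega)
          have e2 : (if 2 ≤ α d then F (fun i => α i - (if i = d then 2 else 0)) σ else 0) = 0 := by
            split_ifs with h2
            · exact hterm 2 one_le_two h2
            · rfl
          have e1 : (if 1 ≤ α d then F (fun i => α i - (if i = d then 1 else 0)) σ else 0) = 0 := by
            split_ifs with h1
            · exact hterm 1 le_rfl h1
            · rfl
          rw [e1, e2]
          ring
        rw [hzero] at h
        exact h
      exact const_of_deriv_zero_aux hz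
  intro τ hτ
  constructor
  · intro α hα
    rw [key _ (Nat.le_of_lt hα) α rfl τ hτ]
    exact hinit α hα
  · intro α hα
    exact key M le_rfl α hα τ hτ
end
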